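/- arXiv:2507.17928 — 4 statements merged into one kernel-verified Lean document; each statement's English description precedes it below -/
import Mathlib

section
/- Let ε₀, μ₀, τ₀, σ₀ > 0 and let (E, H, J, K) solve the abstract weak graphene system on [0, T_fin]. Then for every t ∈ [0, T_fin] the energy identity (1/2)·d/dt[ ε₀‖E(t)‖²_X + μ₀‖H(t)‖²_Y + (τ₀/σ₀)‖J(t)‖²_Z ] + (1/σ₀)‖J(t)‖²_Z = −⟨K(t), H(t)⟩_Y holds. -/
/-!
Test the three equations against `E`, `H` and `J` respectively. The coupling terms `⟪H, B E⟫`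
and `⟪J, T E⟫` then cancel in the sum, leaving the dissipation `‖J‖² / σ₀` and the source term
`⟪K, H⟫`; the sum of the left-hand sides is half the derivative of the energy.
-/

open scoped RealInnerProductSpace

section PowerBalance

variable {X Y Z : Type*}
  [NormedAddCommGroup X] [InnerProductSpace ℝ X]
  [NormedAddCommGroup Y] [InnerProductSpace ℝ Y]
  [NormedAddCommGroup Z] [InnerProductSpace ℝ Z]

theorem graphene_power_balance (B : X →L[ℝ] Y) (T : X →L[ℝ] Z) {ε μ τ σ : ℝ} (hσ : σ ≠ 0)
    {e e' : X} {h h' k : Y} {j j' : Z}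
    (h₁ : ε * ⟪e', e⟫ = ⟪h, B e⟫ - ⟪j, T e⟫)
    (h₂ : μ • h' = -B e - k)
    (h₃ : τ • j' + j = σ • T e) :
    ε * ⟪e, e'⟫ + μ * ⟪h, h'⟫ + τ / σ * ⟪j, j'⟫ + 1 / σ * ‖j‖ ^ 2 = -⟪k, h⟫ := by
  have hH : μ * ⟪h, h'⟫ = -⟪h, B e⟫ - ⟪k, h⟫ := by
    rw [← real_inner_smul_right, h₂, inner_sub_right, inner_neg_right, real_inner_comm k]
  have hJ : τ * ⟪j, j'⟫ + ‖j‖ ^ 2 = σ * ⟪j, T e⟫ := by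
    rw [← real_inner_smul_right, ← real_inner_self_eq_norm_sq, ← inner_add_right, h₃,
      real_inner_smul_right]
  rw [real_inner_comm e']
  field_simp
  linear_combination σ * h₁ + σ * hH + hJ

end PowerBalance

theorem graphene_energy_identity_general
    {X Y Z : Type*}
    [NormedAddCommGroup X] [InnerProductSpace ℝ X]
    [NormedAddCommGroup Y] [InnerProductSpace ℝ Y]
    [NormedAddCommGroup Z] [InnerProductSpace ℝ Z]
    (B : X →L[ℝ] Y) (T : X →L[ℝ] Z)
    (ε₀ μ₀ τ₀ σ₀ Tfin : ℝ)
    (hσ₀ : 0 < σ₀)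
    (E : ℝ → X) (H : ℝ → Y) (J : ℝ → Z) (K : ℝ → Y)
    (hE : ContDiff ℝ 2 E) (hH : ContDiff ℝ 2 H) (hJ : ContDiff ℝ 2 J)
    (heq1 : ∀ t ∈ Set.Icc (0:ℝ) Tfin, ∀ φ : X,
      ε₀ * ⟪deriv E t, φ⟫ = ⟪H t, B φ⟫ - ⟪J t, T φ⟫)
    (heq2 : ∀ t ∈ Set.Icc (0:ℝ) Tfin, μ₀ • deriv H t = -(B (E t)) - K t)
    (heq3 : ∀ t ∈ Set.Icc (0:ℝ) Tfin, τ₀ • deriv J t + J t = σ₀ • T (E t)) :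
    ∀ t ∈ Set.Icc (0:ℝ) Tfin,
      (1/2) * deriv (fun s => ε₀ * ‖E s‖^2 + μ₀ * ‖H s‖^2 + (τ₀/σ₀) * ‖J s‖^2) t
        + (1/σ₀) * ‖J t‖^2 = -⟪K t, H t⟫ := by
  intro t ht
  have hE' : HasDerivAt E (deriv E t) t := (hE.differentiable two_ne_zero t).hasDerivAt
  have hH' : HasDerivAt H (deriv H t) t := (hH.differentiable two_ne_zero t).hasDerivAt
  have hJ' : HasDerivAt J (deriv J t) t := (hJ.differentiable two_ne_zero t).hasDerivAt
  have hEnergy : HasDerivAt (fun s => ε₀ * ‖E s‖^2 + μ₀ * ‖H s‖^2 + (τ₀/σ₀) * ‖J s‖^2) _ t :=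
    ((hE'.norm_sq.const_mul ε₀).add (hH'.norm_sq.const_mul μ₀)).add
    (hJ'.norm_sq.const_mul (τ₀ / σ₀))
  rw [hEnergy.deriv]
  linear_combination graphene_power_balance B T hσ₀.ne' (heq1 t ht (E t)) (heq2 t ht) (heq3 t ht)

/-- Energy identity for the abstract weak graphene system. -/
theorem graphene_energy_identity
    {X Y Z : Type*}
    [NormedAddCommGroup X] [InnerProductSpace ℝ X]
    [NormedAddCommGroup Y] [InnerProductSpace ℝ Y]
    [NormedAddCommGroup Z] [InnerProductSpace ℝ Z]
    (B : X →L[ℝ] Y) (T : X →L[ℝ] Z)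
    (ε₀ μ₀ τ₀ σ₀ Tfin : ℝ)
    (hε₀ : 0 < ε₀) (hμ₀ : 0 < μ₀) (hτ₀ : 0 < τ₀) (hσ₀ : 0 < σ₀) (hTfin : 0 < Tfin)
    (E : ℝ → X) (H : ℝ → Y) (J : ℝ → Z) (K : ℝ → Y)
    (hE : ContDiff ℝ 2 E) (hH : ContDiff ℝ 2 H) (hJ : ContDiff ℝ 2 J)
    (hK : ContDiff ℝ 1 K)
    (heq1 : ∀ t ∈ Set.Icc (0:ℝ) Tfin, ∀ φ : X,
      ε₀ * ⟪deriv E t, φ⟫ = ⟪H t, B φ⟫ - ⟪J t, T φ⟫)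
    (heq2 : ∀ t ∈ Set.Icc (0:ℝ) Tfin, μ₀ • deriv H t = -(B (E t)) - K t)
    (heq3 : ∀ t ∈ Set.Icc (0:ℝ) Tfin, τ₀ • deriv J t + J t = σ₀ • T (E t)) :
    ∀ t ∈ Set.Icc (0:ℝ) Tfin,
      (1/2) * deriv (fun s => ε₀ * ‖E s‖^2 + μ₀ * ‖H s‖^2 + (τ₀/σ₀) * ‖J s‖^2) t
        + (1/σ₀) * ‖J t‖^2 = -⟪K t, H t⟫ :=
  graphene_energy_identity_general B T ε₀ μ₀ τ₀ σ₀ Tfin hσ₀ E H J K hE hH hJ heq1 heq2 heq3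
end

section
/- Let ε₀, μ₀, τ₀, σ₀ > 0 and let (E, H, J, K) solve the abstract weak graphene system on [0, T_fin], with K twice continuously differentiable. Then for every t ∈ [0, T_fin] the time-differentiated energy identity (1/2)·d/dt[ ε₀‖E'(t)‖²_X + μ₀‖H'(t)‖²_Y + (τ₀/σ₀)‖J'(t)‖²_Z ] + (1/σ₀)‖J'(t)‖²_Z = −⟨K'(t), H'(t)⟩_Y holds. -/
/-!
Differentiating the three equations in time shows that `(E', H', J')` solves the same system
with source `K'`; this only needs the equations on `[0, T_fin]`, where one-sided derivatives
are unique. Testing the differentiated equations with `E'`, `H'` and `J' / σ₀` and adding them,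
the coupling terms `⟪H', B E'⟫` and `⟪J', T E'⟫` cancel, which is the energy identity of the
differentiated system.
-/

open scoped RealInnerProductSpace

open Set

theorem HasDerivAt.eq_of_eqOn {𝕜 F : Type*} [NontriviallyNormedField 𝕜] [NormedAddCommGroup F]
    [NormedSpace 𝕜 F] {f g : 𝕜 → F} {f' g' : F} {s : Set 𝕜} {x : 𝕜}
    (hf : HasDerivAt f f' x) (hg : HasDerivAt g g' x) (hfg : EqOn f g s) (hx : x ∈ s)
    (hs : UniqueDiffWithinAt 𝕜 s x) : f' = g' :=
  hs.eq_deriv s (hf.hasDerivWithinAt.congr_of_mem (fun _ hy => (hfg hy).symm) hx)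
    hg.hasDerivWithinAt

section GrapheneSystem

variable {X Y Z : Type*}
  [NormedAddCommGroup X] [InnerProductSpace ℝ X]
  [NormedAddCommGroup Y] [InnerProductSpace ℝ Y]
  [NormedAddCommGroup Z] [InnerProductSpace ℝ Z]
  (B : X →L[ℝ] Y) (T : X →L[ℝ] Z) {ε μ τ σ : ℝ}

/-- The abstract graphene system at one instant, `e'`, `h'`, `j'` standing for the time
derivatives of `e`, `h`, `j`. -/
def GrapheneSystemAt (ε μ τ σ : ℝ) (e e' : X) (h h' k : Y) (j j' : Z) : Prop :=
  (∀ φ, ε * ⟪e', φ⟫ = ⟪h, B φ⟫ - ⟪j, T φ⟫) ∧ μ • h' = -B e - k ∧ τ • j' + j = σ • T e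

variable {B T}

theorem GrapheneSystemAt.energy_balance {e e' : X} {h h' k : Y} {j j' : Z}
    (hsys : GrapheneSystemAt B T ε μ τ σ e e' h h' k j j') (hσ : σ ≠ 0) :
    ε * ⟪e, e'⟫ + μ * ⟪h, h'⟫ + τ / σ * ⟪j, j'⟫ + 1 / σ * ‖j‖ ^ 2 = -⟪k, h⟫ := by
  obtain ⟨h_ampere, h_faraday, h_current⟩ := hsys
  have h_faraday_h : μ * ⟪h', h⟫ = -⟪B e, h⟫ - ⟪k, h⟫ := by
    simpa [real_inner_smul_left, inner_sub_left] using congrArg (⟪·, h⟫) h_faraday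
  have h_current_j : τ / σ * ⟪j', j⟫ + 1 / σ * ‖j‖ ^ 2 = ⟪T e, j⟫ := by
    have := congrArg (⟪·, j⟫) h_current
    simp only [inner_add_left, real_inner_smul_left, real_inner_self_eq_norm_sq] at this
    field_simp
    linear_combination this
  rw [real_inner_comm e', real_inner_comm h', real_inner_comm j']
  linear_combination h_ampere e + h_faraday_h + h_current_j - real_inner_comm h (B e)
    + real_inner_comm j (T e)

theorem grapheneSystemAt_deriv {E : ℝ → X} {H K : ℝ → Y} {J : ℝ → Z} {s : Set ℝ} {t : ℝ}
    (hE : ContDiff ℝ 2 E) (hH : ContDiff ℝ 2 H) (hJ : ContDiff ℝ 2 J)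
    (hK : DifferentiableAt ℝ K t)
    (hsys : ∀ r ∈ s, GrapheneSystemAt B T ε μ τ σ
      (E r) (deriv E r) (H r) (deriv H r) (K r) (J r) (deriv J r))
    (hs : UniqueDiffWithinAt ℝ s t) (ht : t ∈ s) :
    GrapheneSystemAt B T ε μ τ σ (deriv E t) (deriv (deriv E) t) (deriv H t)
      (deriv (deriv H) t) (deriv K t) (deriv J t) (deriv (deriv J) t) := by
  have hE₁ := (hE.differentiable two_ne_zero t).hasDerivAt
  have hH₁ := (hH.differentiable two_ne_zero t).hasDerivAt
  have hJ₁ := (hJ.differentiable two_ne_zero t).hasDerivAt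
  have hE₂ := (hE.differentiable_deriv_two t).hasDerivAt
  have hH₂ := (hH.differentiable_deriv_two t).hasDerivAt
  have hJ₂ := (hJ.differentiable_deriv_two t).hasDerivAt
  refine ⟨fun φ => ?_, ?_, ?_⟩
  · have hlhs := (hE₂.inner ℝ (hasDerivAt_const t φ)).const_mul ε
    have hrhs := (hH₁.inner ℝ (hasDerivAt_const t (B φ))).sub
      (hJ₁.inner ℝ (hasDerivAt_const t (T φ)))
    simp only [inner_zero_right, zero_add] at hlhs hrhs
    exact hlhs.eq_of_eqOn hrhs (fun r hr => (hsys r hr).1 φ) ht hs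
  · exact (hH₂.const_smul μ).eq_of_eqOn
      ((B.hasFDerivAt.comp_hasDerivAt t hE₁).neg.sub hK.hasDerivAt)
      (fun r hr => (hsys r hr).2.1) ht hs
  · exact ((hJ₂.const_smul τ).add hJ₁).eq_of_eqOn
      ((T.hasFDerivAt.comp_hasDerivAt t hE₁).const_smul σ)
      (fun r hr => (hsys r hr).2.2) ht hs

theorem hasDerivAt_weighted_energy {e : ℝ → X} {h : ℝ → Y} {j : ℝ → Z} {e' : X} {h' : Y}
    {j' : Z} {t c : ℝ} (he : HasDerivAt e e' t) (hh : HasDerivAt h h' t)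
    (hj : HasDerivAt j j' t) :
    HasDerivAt (fun s => ε * ‖e s‖ ^ 2 + μ * ‖h s‖ ^ 2 + c * ‖j s‖ ^ 2)
      (2 * (ε * ⟪e t, e'⟫ + μ * ⟪h t, h'⟫ + c * ⟪j t, j'⟫)) t :=
  (((he.norm_sq.const_mul ε).add (hh.norm_sq.const_mul μ)).add
    (hj.norm_sq.const_mul c)).congr_deriv (by ring)

end GrapheneSystem

theorem graphene_differentiated_energy_identity_general
    {X Y Z : Type*}
    [NormedAddCommGroup X] [InnerProductSpace ℝ X]
    [NormedAddCommGroup Y] [InnerProductSpace ℝ Y]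
    [NormedAddCommGroup Z] [InnerProductSpace ℝ Z]
    (B : X →L[ℝ] Y) (T : X →L[ℝ] Z)
    (ε₀ μ₀ τ₀ σ₀ Tfin : ℝ)
    (hσ₀ : 0 < σ₀) (hTfin : 0 < Tfin)
    (E : ℝ → X) (H : ℝ → Y) (J : ℝ → Z) (K : ℝ → Y)
    (hE : ContDiff ℝ 2 E) (hH : ContDiff ℝ 2 H) (hJ : ContDiff ℝ 2 J)
    (hK : ContDiff ℝ 2 K)
    (heq1 : ∀ t ∈ Set.Icc (0:ℝ) Tfin, ∀ φ : X,
      ε₀ * ⟪deriv E t, φ⟫ = ⟪H t, B φ⟫ - ⟪J t, T φ⟫)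
    (heq2 : ∀ t ∈ Set.Icc (0:ℝ) Tfin, μ₀ • deriv H t = -(B (E t)) - K t)
    (heq3 : ∀ t ∈ Set.Icc (0:ℝ) Tfin, τ₀ • deriv J t + J t = σ₀ • T (E t)) :
    ∀ t ∈ Set.Icc (0:ℝ) Tfin,
      (1/2) * deriv (fun s => ε₀ * ‖deriv E s‖^2 + μ₀ * ‖deriv H s‖^2
          + (τ₀/σ₀) * ‖deriv J s‖^2) t
        + (1/σ₀) * ‖deriv J t‖^2 = -⟪deriv K t, deriv H t⟫ := by
  intro t ht
  have hsys' := grapheneSystemAt_deriv hE hH hJ (hK.differentiable two_ne_zero t)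
    (fun r hr => ⟨heq1 r hr, heq2 r hr, heq3 r hr⟩) (uniqueDiffOn_Icc hTfin t ht) ht
  rw [(hasDerivAt_weighted_energy (hE.differentiable_deriv_two t).hasDerivAt
    (hH.differentiable_deriv_two t).hasDerivAt (hJ.differentiable_deriv_two t).hasDerivAt).deriv]
  linear_combination hsys'.energy_balance hσ₀.ne'

/-- Time-differentiated energy identity for the abstract weak
graphene system (with `K` twice continuously differentiable). -/
theorem graphene_differentiated_energy_identity
    {X Y Z : Type*}
    [NormedAddCommGroup X] [InnerProductSpace ℝ X]
    [NormedAddCommGroup Y] [InnerProductSpace ℝ Y]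
    [NormedAddCommGroup Z] [InnerProductSpace ℝ Z]
    (B : X →L[ℝ] Y) (T : X →L[ℝ] Z)
    (ε₀ μ₀ τ₀ σ₀ Tfin : ℝ)
    (hε₀ : 0 < ε₀) (hμ₀ : 0 < μ₀) (hτ₀ : 0 < τ₀) (hσ₀ : 0 < σ₀) (hTfin : 0 < Tfin)
    (E : ℝ → X) (H : ℝ → Y) (J : ℝ → Z) (K : ℝ → Y)
    (hE : ContDiff ℝ 2 E) (hH : ContDiff ℝ 2 H) (hJ : ContDiff ℝ 2 J)
    (hK : ContDiff ℝ 2 K)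
    (heq1 : ∀ t ∈ Set.Icc (0:ℝ) Tfin, ∀ φ : X,
      ε₀ * ⟪deriv E t, φ⟫ = ⟪H t, B φ⟫ - ⟪J t, T φ⟫)
    (heq2 : ∀ t ∈ Set.Icc (0:ℝ) Tfin, μ₀ • deriv H t = -(B (E t)) - K t)
    (heq3 : ∀ t ∈ Set.Icc (0:ℝ) Tfin, τ₀ • deriv J t + J t = σ₀ • T (E t)) :
    ∀ t ∈ Set.Icc (0:ℝ) Tfin,
      (1/2) * deriv (fun s => ε₀ * ‖deriv E s‖^2 + μ₀ * ‖deriv H s‖^2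
          + (τ₀/σ₀) * ‖deriv J s‖^2) t
        + (1/σ₀) * ‖deriv J t‖^2 = -⟪deriv K t, deriv H t⟫ :=
  graphene_differentiated_energy_identity_general B T ε₀ μ₀ τ₀ σ₀ Tfin hσ₀ hTfin E H J K hE hH hJ hK
    heq1 heq2 heq3
end

section
/- Let V be a real inner product space with norm ‖·‖, let τ > 0 and T_fin > 0, let K : ℕ → V be a sequence, and let m ≥ 2 be an even integer with m·τ ≤ T_fin. Then ‖K_m‖² ≤ 2‖K₀‖² + 4·T_fin·τ·Σ_{n=1}^{m−1} ‖(K_{n+1} − K_{n−1})/(2τ)‖². -/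
/-!
For even `m = 2N`, `K_m - K_0` telescopes over the even steps into `2τ` times the sum of the `N`
odd-indexed centered differences `δ_{2τ} K_{2j+1}`. Cauchy–Schwarz bounds its square by
`4τ² N Σ ‖δ_{2τ} K_n‖² = 2mτ² Σ ‖δ_{2τ} K_n‖²`, and `mτ ≤ T_fin` together with
`‖a‖² ≤ 2‖b‖² + 2‖a - b‖²` gives the bound.
-/

open Finset

/-- The paper's `δ_{2τ} K_n`. -/
noncomputable def centeredDiff {V : Type*} [AddCommGroup V] [Module ℝ V]
    (τ : ℝ) (K : ℕ → V) (n : ℕ) : V :=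
  (2 * τ)⁻¹ • (K (n + 1) - K (n - 1))

section CenteredDiff

variable {V : Type*} [AddCommGroup V] [Module ℝ V] {τ : ℝ}

theorem smul_centeredDiff_succ (hτ : τ ≠ 0) (K : ℕ → V) (n : ℕ) :
    (2 * τ) • centeredDiff τ K (n + 1) = K (n + 2) - K n := by
  rw [centeredDiff, smul_smul, mul_inv_cancel₀ (mul_ne_zero two_ne_zero hτ), one_smul]
  rfl

theorem sub_eq_smul_sum_centeredDiff_odd (hτ : τ ≠ 0) (K : ℕ → V) (N : ℕ) :
    K (2 * N) - K 0 = (2 * τ) • ∑ j ∈ range N, centeredDiff τ K (2 * j + 1) := by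
  simp only [smul_sum, smul_centeredDiff_succ hτ]
  exact (sum_range_sub (fun j => K (2 * j)) N).symm

end CenteredDiff

theorem norm_sum_sq_le_card_mul_sum_norm_sq {ι E : Type*} [SeminormedAddCommGroup E]
    (s : Finset ι) (v : ι → E) :
    ‖∑ i ∈ s, v i‖ ^ 2 ≤ #s * ∑ i ∈ s, ‖v i‖ ^ 2 :=
  (pow_le_pow_left₀ (norm_nonneg _) (norm_sum_le s v) 2).trans (sq_sum_le_card_mul_sum_sq ..)

theorem norm_sq_le_two_mul_norm_sq_add_two_mul_norm_sub_sq {E : Type*} [SeminormedAddCommGroup E]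
    (x y : E) : ‖x‖ ^ 2 ≤ 2 * ‖y‖ ^ 2 + 2 * ‖x - y‖ ^ 2 := by
  calc ‖x‖ ^ 2 ≤ (‖y‖ + ‖x - y‖) ^ 2 :=
        pow_le_pow_left₀ (norm_nonneg _) (norm_le_insert' x y) 2
    _ ≤ 2 * ‖y‖ ^ 2 + 2 * ‖x - y‖ ^ 2 := by linarith [add_sq_le (a := ‖y‖) (b := ‖x - y‖)]

theorem sum_range_odd_le_sum_Icc {M : Type*} [AddCommMonoid M] [PartialOrder M]
    [IsOrderedAddMonoid M] {f : ℕ → M} (hf : ∀ n, 0 ≤ f n) (N : ℕ) :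
    ∑ j ∈ range N, f (2 * j + 1) ≤ ∑ n ∈ Icc 1 (2 * N - 1), f n := by
  rw [← sum_image (g := fun j => 2 * j + 1) (fun _ _ _ _ h => by simp only at h; omega)]
  refine sum_le_sum_of_subset_of_nonneg (fun n hn => ?_) (fun n _ _ => hf n)
  simp only [mem_image, mem_range] at hn
  obtain ⟨j, hj, rfl⟩ := hn
  simp only [mem_Icc]
  omega

theorem norm_sub_sq_le_sum_centeredDiff_sq {V : Type*} [SeminormedAddCommGroup V] [NormedSpace ℝ V]
    {τ : ℝ} (hτ : τ ≠ 0) (K : ℕ → V) (N : ℕ) :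
    ‖K (2 * N) - K 0‖ ^ 2
      ≤ 4 * τ ^ 2 * N * ∑ n ∈ Icc 1 (2 * N - 1), ‖centeredDiff τ K n‖ ^ 2 := by
  have hodd := sum_range_odd_le_sum_Icc (fun n => sq_nonneg ‖centeredDiff τ K n‖) N
  calc ‖K (2 * N) - K 0‖ ^ 2
        = 4 * τ ^ 2 * ‖∑ j ∈ range N, centeredDiff τ K (2 * j + 1)‖ ^ 2 := by
          rw [sub_eq_smul_sum_centeredDiff_odd hτ, norm_smul, mul_pow, Real.norm_eq_abs,
            sq_abs]
          ring
    _ ≤ 4 * τ ^ 2 * (N * ∑ j ∈ range N, ‖centeredDiff τ K (2 * j + 1)‖ ^ 2) := by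
          gcongr
          simpa using norm_sum_sq_le_card_mul_sum_norm_sq (range N) _
    _ ≤ 4 * τ ^ 2 * N * ∑ n ∈ Icc 1 (2 * N - 1), ‖centeredDiff τ K n‖ ^ 2 := by
          rw [← mul_assoc]
          gcongr

theorem source_telescoping_bound_even_general
    {V : Type*} [NormedAddCommGroup V] [InnerProductSpace ℝ V]
    (τ Tfin : ℝ) (hτ : 0 < τ)
    (K : ℕ → V) (m : ℕ) (hmeven : Even m) (hmτ : (m : ℝ) * τ ≤ Tfin) :
    ‖K m‖^2 ≤ 2 * ‖K 0‖^2
      + 4 * Tfin * τ * ∑ n ∈ Finset.Icc 1 (m-1), ‖(2*τ)⁻¹ • (K (n+1) - K (n-1))‖^2 := by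
  obtain ⟨N, rfl⟩ := hmeven
  rw [← two_mul] at hmτ ⊢
  set S := ∑ n ∈ Icc 1 (2 * N - 1), ‖centeredDiff τ K n‖ ^ 2
  have hincr := norm_sub_sq_le_sum_centeredDiff_sq hτ.ne' K N
  have hstep : 8 * τ ^ 2 * N * S ≤ 4 * Tfin * τ * S := by
    push_cast at hmτ
    linarith [mul_le_mul_of_nonneg_right hmτ (by positivity : (0 : ℝ) ≤ 4 * τ * S)]
  change _ ≤ 2 * ‖K 0‖ ^ 2 + 4 * Tfin * τ * S
  linarith [norm_sq_le_two_mul_norm_sq_add_two_mul_norm_sub_sq (K (2 * N)) (K 0)]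

/-- The telescoping bound for the source terms at even indices:
`‖K_m‖² ≤ 2‖K₀‖² + 4 T τ Σ_{n=1}^{m−1} ‖δ_{2τ}K_n‖²`. -/
theorem source_telescoping_bound_even
    {V : Type*} [NormedAddCommGroup V] [InnerProductSpace ℝ V]
    (τ Tfin : ℝ) (hτ : 0 < τ) (hTfin : 0 < Tfin)
    (K : ℕ → V) (m : ℕ) (hm : 2 ≤ m) (hmeven : Even m) (hmτ : (m : ℝ) * τ ≤ Tfin) :
    ‖K m‖^2 ≤ 2 * ‖K 0‖^2
      + 4 * Tfin * τ * ∑ n ∈ Finset.Icc 1 (m-1), ‖(2*τ)⁻¹ • (K (n+1) - K (n-1))‖^2 :=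
  source_telescoping_bound_even_general τ Tfin hτ K m hmeven hmτ
end

section
/- Let V be a real inner product space with norm ‖·‖, let τ > 0 and T_fin > 0, let K : ℕ → V be a sequence, and let m ≥ 1 be an odd integer with (m−1)·τ ≤ T_fin. Then ‖K_m‖² ≤ 2‖K₁‖² + 4·T_fin·τ·Σ_{n=2}^{m−1} ‖(K_{n+1} − K_{n−1})/(2τ)‖² (for m = 1 the sum is empty). -/
open scoped RealInnerProductSpace

/-- The telescoping bound for the source terms at odd indices:
`‖K_m‖² ≤ 2‖K₁‖² + 4 T τ Σ_{n=2}^{m−1} ‖δ_{2τ}K_n‖²`. -/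
theorem source_telescoping_bound_odd
    {V : Type*} [NormedAddCommGroup V] [InnerProductSpace ℝ V]
    (τ Tfin : ℝ) (hτ : 0 < τ) (hTfin : 0 < Tfin)
    (K : ℕ → V) (m : ℕ) (hm : 1 ≤ m) (hmodd : Odd m)
    (hmτ : ((m : ℝ) - 1) * τ ≤ Tfin) :
    ‖K m‖^2 ≤ 2 * ‖K 1‖^2
      + 4 * Tfin * τ * ∑ n ∈ Finset.Icc 2 (m-1), ‖(2*τ)⁻¹ • (K (n+1) - K (n-1))‖^2 := by
  obtain ⟨k, hk⟩ := hmodd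
  subst hk
  set S := ∑ n ∈ Finset.Icc 2 (2*k+1-1), ‖(2*τ)⁻¹ • (K (n+1) - K (n-1))‖^2 with hS
  have hSnonneg : 0 ≤ S := Finset.sum_nonneg fun n _ => by positivity
  -- telescoping
  have htel : K (2*k+1) - K 1 = ∑ j ∈ Finset.range k, (K (2*(j+1)+1) - K (2*j+1)) := by
    rw [Finset.sum_range_sub (fun j => K (2*j+1)) k]
  -- norm bound via triangle + Cauchy-Schwarz
  have h2 : ‖K (2*k+1) - K 1‖^2
      ≤ (k : ℝ) * ∑ j ∈ Finset.range k, ‖K (2*(j+1)+1) - K (2*j+1)‖^2 := by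
    have hns : ‖K (2*k+1) - K 1‖ ≤ ∑ j ∈ Finset.range k, ‖K (2*(j+1)+1) - K (2*j+1)‖ := by
      rw [htel]; exact norm_sum_le _ _
    have hcs : (∑ j ∈ Finset.range k, ‖K (2*(j+1)+1) - K (2*j+1)‖)^2
        ≤ (k : ℝ) * ∑ j ∈ Finset.range k, ‖K (2*(j+1)+1) - K (2*j+1)‖^2 := by
      simpa using sq_sum_le_card_mul_sum_sq
        (s := Finset.range k) (f := fun j => ‖K (2*(j+1)+1) - K (2*j+1)‖)
    calc ‖K (2*k+1) - K 1‖^2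
        ≤ (∑ j ∈ Finset.range k, ‖K (2*(j+1)+1) - K (2*j+1)‖)^2 := by
          apply pow_le_pow_left₀ (norm_nonneg _) hns
      _ ≤ _ := hcs
  -- rewrite each term with the centered difference
  have hterm : ∀ j, ‖K (2*(j+1)+1) - K (2*j+1)‖^2
      = (2*τ)^2 * ‖(2*τ)⁻¹ • (K ((2*j+2)+1) - K ((2*j+2)-1))‖^2 := by
    intro j
    have hne : (2*τ) ≠ 0 := by positivity
    have : K (2*(j+1)+1) - K (2*j+1)
        = (2*τ) • ((2*τ)⁻¹ • (K ((2*j+2)+1) - K ((2*j+2)-1))) := by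
      rw [smul_smul, mul_inv_cancel₀ hne, one_smul]
      congr 1 <;> omega
    rw [this, norm_smul, Real.norm_eq_abs, abs_of_pos (by positivity : (0:ℝ) < 2*τ), mul_pow]
  -- bound the reindexed sum by S
  have h4 : ∑ j ∈ Finset.range k, ‖(2*τ)⁻¹ • (K ((2*j+2)+1) - K ((2*j+2)-1))‖^2 ≤ S := by
    rw [hS]
    have hinj : ∀ a ∈ Finset.range k, ∀ b ∈ Finset.range k,
        2*a+2 = 2*b+2 → a = b := by intros; omega
    rw [show (∑ j ∈ Finset.range k, ‖(2*τ)⁻¹ • (K ((2*j+2)+1) - K ((2*j+2)-1))‖^2)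
        = ∑ n ∈ (Finset.range k).image (fun j => 2*j+2), ‖(2*τ)⁻¹ • (K (n+1) - K (n-1))‖^2 from
      (Finset.sum_image (s := Finset.range k) (g := fun j => 2*j+2) (f := fun n => ‖(2*τ)⁻¹ • (K (n+1) - K (n-1))‖^2) hinj).symm]
    apply Finset.sum_le_sum_of_subset_of_nonneg
    · intro n hn
      simp only [Finset.mem_image, Finset.mem_range] at hn
      obtain ⟨j, hj, rfl⟩ := hn
      simp only [Finset.mem_Icc]; omega
    · intros; positivity
  -- combine
  have h1 : ‖K (2*k+1)‖^2 ≤ 2 * ‖K 1‖^2 + 2 * ‖K (2*k+1) - K 1‖^2 := by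
    have := norm_sub_norm_le (K (2*k+1)) (K 1)
    nlinarith [norm_nonneg (K (2*k+1) - K 1), norm_nonneg (K (2*k+1)), norm_nonneg (K 1), sq_nonneg (‖K 1‖ - ‖K (2*k+1) - K 1‖)]
  have hsum : ∑ j ∈ Finset.range k, ‖K (2*(j+1)+1) - K (2*j+1)‖^2
      = (2*τ)^2 * ∑ j ∈ Finset.range k, ‖(2*τ)⁻¹ • (K ((2*j+2)+1) - K ((2*j+2)-1))‖^2 := by
    rw [Finset.mul_sum]; exact Finset.sum_congr rfl fun j _ => hterm j
  have hkτ : (k : ℝ) * (2*τ) ≤ Tfin := by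
    have : ((2*k+1 : ℕ) : ℝ) - 1 = 2 * (k:ℝ) := by push_cast; ring
    nlinarith [hmτ, this]
  have hfin : (k : ℝ) * ((2*τ)^2 * S) ≤ Tfin * (2*τ) * S := by
    have h := mul_le_mul_of_nonneg_right hkτ (mul_nonneg (by positivity : (0:ℝ) ≤ 2*τ) hSnonneg)
    nlinarith
  have h2' : ‖K (2*k+1) - K 1‖^2 ≤ (k:ℝ) * ((2*τ)^2 * S) := by
    rw [hsum] at h2
    calc ‖K (2*k+1) - K 1‖^2 ≤ (k:ℝ) * ((2*τ)^2 *
          ∑ j ∈ Finset.range k, ‖(2*τ)⁻¹ • (K ((2*j+2)+1) - K ((2*j+2)-1))‖^2) := by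
          rw [← mul_assoc] at h2 ⊢; exact h2
      _ ≤ (k:ℝ) * ((2*τ)^2 * S) := by
          apply mul_le_mul_of_nonneg_left _ (Nat.cast_nonneg k)
          exact mul_le_mul_of_nonneg_left h4 (by positivity)
    
  nlinarith [h1, h2', hfin]
end
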